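/- arXiv:1511.03354 — 4 statements merged into one kernel-verified Lean document; each statement's English description precedes it below -/
import Mathlib

section
/- The set of autocorrelations of probability measures on the circle is not convex: there exists N ∈ ℕ such that for every integer n ≥ N, there is no probability measure ρ on 𝕋 = ℝ/ℤ whose autocorrelation F_ρ equals the measure with density g_n(x) = 1 + (1/4)cos(2πx) + (1/4)cos(2πnx) with respect to Haar measure. (Note that g_n·Haar is the convex combination, with weight 1/2 each, of the autocorrelations of the probability densities 1 + cos(2πx) and 1 + cos(2πnx).) (Remark 3.2.) -/
open MeasureTheory Real
open scoped ENNReal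

theorem cos2pi_periodic : Function.Periodic (fun t : ℝ => Real.cos (2 * Real.pi * t)) 1 := by
  intro x; simp [mul_add, Real.cos_add_two_pi]

theorem sin2pi_periodic : Function.Periodic (fun t : ℝ => Real.sin (2 * Real.pi * t)) 1 := by
  intro x; simp [mul_add, Real.sin_add_two_pi]

/-- The function `x ↦ cos (2π x)` on the circle `ℝ/ℤ`. -/
noncomputable def cosA : AddCircle (1 : ℝ) → ℝ := cos2pi_periodic.lift

/-- The function `x ↦ sin (2π x)` on the circle `ℝ/ℤ`. -/
noncomputable def sinA : AddCircle (1 : ℝ) → ℝ := sin2pi_periodic.lift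

/-- The `d`-dimensional torus `𝕋^d = ℝ^d/ℤ^d`, with its Haar probability measure `volume`. -/
abbrev Torus (d : ℕ) := Fin d → AddCircle (1 : ℝ)

/-- `cos (2π k·x)` for `k ∈ ℤ^d` and `x ∈ 𝕋^d`. -/
noncomputable def tcos {d : ℕ} (k : Fin d → ℤ) (x : Torus d) : ℝ := cosA (∑ i, k i • x i)

/-- `sin (2π k·x)` for `k ∈ ℤ^d` and `x ∈ 𝕋^d`. -/
noncomputable def tsin {d : ℕ} (k : Fin d → ℤ) (x : Torus d) : ℝ := sinA (∑ i, k i • x i)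

/-- `cos (2π k x)` on the circle `𝕋 = ℝ/ℤ`. -/
noncomputable def cosC (k : ℤ) (x : AddCircle (1 : ℝ)) : ℝ := cosA (k • x)

/-- `sin (2π k x)` on the circle `𝕋 = ℝ/ℤ`. -/
noncomputable def sinC (k : ℤ) (x : AddCircle (1 : ℝ)) : ℝ := sinA (k • x)

/-- The autocorrelation of a measure `ρ` on the circle `𝕋`: the pushforward of `ρ × ρ`
under `(x, y) ↦ x - y`. -/
noncomputable def autocorrC (ρ : Measure (AddCircle (1 : ℝ))) : Measure (AddCircle (1 : ℝ)) :=
  (ρ.prod ρ).map (fun p => p.1 - p.2)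

/-!
Write `γ k = ∫ e^{-2πikx} dρ(x)`. The autocorrelation of `ρ` has Fourier coefficients `|γ k|²`,
so `γ` vanishes off `{0, ±1, ±n}` and `|γ 1| = |γ n| = 1/√8`. As `γ` is positive definite,
`∑ v_p conj(v_q) γ(q - p) ≥ 0`. Test this on the `4 × 4` grid of frequencies `i + jn` with
weights `u^i w^j`, the unit phases `u, w` turning `γ 1` and `γ n` into negative reals: for `n ≥ 5`
only the differences `0, ±1, ±n` contribute and the sum is `16 - 24 (|γ 1| + |γ n|) < 0`.
-/

open ComplexConjugate Finset

theorem sum_range_sum_range_sub {M : Type*} [AddCommMonoid M] (F : ℤ → M) (m : ℕ)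
    (hF : ∀ d : ℤ, 1 < |d| → |d| < m → F d = 0) :
    ∑ i ∈ range m, ∑ j ∈ range m, F (j - i) = m • F 0 + (m - 1) • (F 1 + F (-1)) := by
  induction m with
  | zero => simp
  | succ m ih =>
    have hstep : ∑ i ∈ range (m + 1), ∑ j ∈ range (m + 1), F (j - i) =
        ∑ i ∈ range m, ∑ j ∈ range m, F (j - i) +
          ∑ i ∈ range m, (F ((m : ℤ) - i) + F ((i : ℤ) - m)) + F 0 := by
      simp only [sum_range_succ, sum_add_distrib, sub_self]
      abel
    rw [hstep, ih fun d h1 h2 => hF d h1 (by omega)]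
    rcases m with _ | m
    · simp
    have hfar : ∀ i ∈ range m, F (((m + 1 : ℕ) : ℤ) - i) + F ((i : ℤ) - (m + 1 : ℕ)) = 0 := by
      intro i hi
      rw [mem_range] at hi
      rw [hF _ (by rw [lt_abs]; omega) (by rw [abs_lt]; omega),
        hF _ (by rw [lt_abs]; omega) (by rw [abs_lt]; omega), add_zero]
    rw [sum_range_succ, sum_eq_zero hfar]
    push_cast
    simp only [add_sub_cancel_left, sub_add_cancel_left, succ_nsmul]
    abel

theorem sum_product_sum_product_sub {M : Type*} [AddCommMonoid M] (F : ℤ → ℤ → M) (m : ℕ)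
    (hF : ∀ d e : ℤ, 1 < |d| + |e| → |d| < m → |e| < m → F d e = 0) :
    ∑ p ∈ range m ×ˢ range m, ∑ q ∈ range m ×ˢ range m, F (q.1 - p.1) (q.2 - p.2) =
      (m * m) • F 0 0 + (m * (m - 1)) • (F 1 0 + F (-1) 0 + F 0 1 + F 0 (-1)) := by
  have hrange : ∀ i ∈ range m, ∀ j ∈ range m, |(j : ℤ) - i| < m := fun i hi j hj => by
    rw [mem_range] at hi hj; rw [abs_lt]; omega
  have hcorner : ∀ s t : ℤ, |s| = 1 → |t| = 1 → (m - 1) • F s t = 0 := by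
    intro s t hs ht
    rcases Nat.lt_or_ge m 2 with hm | hm
    · rw [Nat.sub_eq_zero_of_le (by omega), zero_smul]
    · rw [hF s t (by rw [hs, ht]; norm_num) (by rw [hs]; exact_mod_cast hm)
        (by rw [ht]; exact_mod_cast hm), smul_zero]
  have hinner : ∀ i ∈ range m, ∀ i' ∈ range m,
      ∑ j ∈ range m, ∑ j' ∈ range m, F (i' - i) (j' - j) =
        m • F (i' - i) 0 + (m - 1) • (F (i' - i) 1 + F (i' - i) (-1)) :=
    fun i hi i' hi' => sum_range_sum_range_sub _ m fun e he he' =>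
      hF _ _ (by linarith [abs_nonneg ((i' : ℤ) - i)]) (hrange i hi i' hi') he'
  have hline : ∀ e : ℤ, |e| ≤ 1 → ∀ d : ℤ, 1 < |d| → |d| < m → F d e = 0 := fun e _ d hd hd' =>
    hF d e (by linarith [abs_nonneg e]) hd' (by linarith)
  simp_rw [sum_product]
  rw [sum_congr rfl fun i _ => sum_comm, sum_congr rfl fun i hi => sum_congr rfl (hinner i hi)]
  simp only [sum_add_distrib, ← smul_sum]
  rw [sum_range_sum_range_sub (F · 0) m (hline 0 (by norm_num)),
    sum_range_sum_range_sub (F · 1) m (hline 1 (by norm_num)),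
    sum_range_sum_range_sub (F · (-1)) m (hline (-1) (by norm_num))]
  simp only [smul_add, smul_smul, add_zero, Nat.mul_comm (m - 1) m,
    hcorner 1 1 (by norm_num) (by norm_num), hcorner (-1) 1 (by norm_num) (by norm_num),
    hcorner 1 (-1) (by norm_num) (by norm_num), hcorner (-1) (-1) (by norm_num) (by norm_num)]
  abel

theorem sum_circle_pow_grid_eq (γ : ℤ → ℂ) {n : ℤ} (hn : 5 ≤ n)
    (hγ : Function.support γ ⊆ {0, 1, -1, n, -n}) (u w : Circle) :
    ∑ p ∈ range 4 ×ˢ range 4, ∑ q ∈ range 4 ×ˢ range 4,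
      (↑(u ^ p.1 * w ^ p.2) : ℂ) * conj ↑(u ^ q.1 * w ^ q.2) *
        γ ((q.1 + q.2 * n) - (p.1 + p.2 * n)) =
      16 * γ 0 + 12 * (conj ↑u * γ 1 + ↑u * γ (-1) + conj ↑w * γ n + ↑w * γ (-n)) := by
  set F : ℤ → ℤ → ℂ := fun d e => ↑(u ^ (-d) * w ^ (-e)) * γ (d + e * n) with hF
  have hterm : ∀ p q : ℕ × ℕ, (↑(u ^ p.1 * w ^ p.2) : ℂ) * conj ↑(u ^ q.1 * w ^ q.2) *
      γ ((q.1 + q.2 * n) - (p.1 + p.2 * n)) = F (q.1 - p.1) (q.2 - p.2) := by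
    intro p q
    rw [hF, ← Circle.coe_inv_eq_conj, ← Circle.coe_mul]
    congr 2
    · simp only [zpow_neg, zpow_sub, zpow_natCast, mul_inv_rev, inv_inv]
      ac_rfl
    · ring
  have hsupp : ∀ d e : ℤ, 1 < |d| + |e| → |d| < (4 : ℕ) → |e| < (4 : ℕ) → F d e = 0 := by
    intro d e hde hd he
    simp only [abs_eq_max_neg, Nat.cast_ofNat] at hde hd he
    have he1 : -3 ≤ e := by omega
    have he2 : e ≤ 3 := by omega
    suffices d + e * n ∉ ({0, 1, -1, n, -n} : Set ℤ) by
      dsimp only [F]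
      rw [Function.notMem_support.mp fun h => this (hγ h), mul_zero]
    simp only [Set.mem_insert_iff, Set.mem_singleton_iff]
    interval_cases e <;> omega
  simp_rw [hterm]
  rw [sum_product_sum_product_sub F 4 hsupp]
  simp only [Nat.reduceMul, zpow_neg, Circle.coe_mul, Circle.coe_inv, Circle.coe_zpow, zpow_ofNat,
    pow_zero, inv_one, mul_one, zero_mul, add_zero, one_mul, nsmul_eq_mul, Nat.cast_ofNat,
    Nat.add_one_sub_one, pow_one, Int.reduceNeg, inv_inv, zero_add, neg_mul, smul_add,
    ← Circle.coe_inv_eq_conj, add_right_inj, F]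
  ring

lemma exists_circle_conj_mul_eq_neg_norm (z : ℂ) : ∃ u : Circle, conj (u : ℂ) * z = -‖z‖ := by
  refine ⟨Circle.exp (Complex.arg z + π), ?_⟩
  rw [← Circle.coe_inv_eq_conj, ← Circle.exp_neg, Circle.coe_exp]
  conv_lhs => arg 2; rw [← Complex.norm_mul_exp_arg_mul_I z]
  rw [mul_left_comm, ← Complex.exp_add]
  push_cast
  rw [show -(↑(Complex.arg z) + ↑π) * Complex.I + ↑(Complex.arg z) * Complex.I =
      -(π * Complex.I) by ring, Complex.exp_neg, Complex.exp_pi_mul_I]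
  simp

namespace AddCircle

variable {T : ℝ}

noncomputable def fourierStieltjes (μ : Measure (AddCircle T)) (k : ℤ) : ℂ :=
  ∫ x, fourier (-k) x ∂μ

lemma fourier_sub_apply (k : ℤ) (x y : AddCircle T) :
    fourier k (x - y) = fourier k x * conj (fourier k y) := by
  rw [fourier_apply, fourier_apply, fourier_apply, smul_sub, sub_eq_add_neg, toCircle_add,
    Circle.coe_mul, toCircle_neg, Circle.coe_inv_eq_conj]

lemma fourierStieltjes_zero (μ : Measure (AddCircle T)) :
    fourierStieltjes μ 0 = μ.real Set.univ := by
  simp [fourierStieltjes]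

lemma fourierStieltjes_neg (μ : Measure (AddCircle T)) (k : ℤ) :
    fourierStieltjes μ (-k) = conj (fourierStieltjes μ k) := by
  simp_rw [fourierStieltjes, ← integral_conj, ← fourier_neg]

lemma fourierStieltjes_map_sub (μ : Measure (AddCircle T)) [IsFiniteMeasure μ] (k : ℤ) :
    fourierStieltjes ((μ.prod μ).map fun p => p.1 - p.2) k =
      Complex.normSq (fourierStieltjes μ k) := by
  rw [fourierStieltjes, integral_map (by fun_prop) (map_continuous _).aestronglyMeasurable]
  simp_rw [fourier_sub_apply]
  rw [integral_prod_mul (fun x => fourier (-k) x) fun y => conj (fourier (-k) y), integral_conj,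
    ← Complex.mul_conj, fourierStieltjes]

variable [Fact (0 < T)]

lemma integrable_continuousMap {E : Type*} [NormedAddCommGroup E] (μ : Measure (AddCircle T))
    [IsFiniteMeasure μ] (f : C(AddCircle T, E)) : Integrable f μ :=
  f.continuous.integrable_of_hasCompactSupport (.of_compactSpace _)

lemma fourierCoeff_sum_smul_fourier (s : Finset ℤ) (c : ℤ → ℂ) (k : ℤ) :
    fourierCoeff ⇑(∑ m ∈ s, c m • fourier m : C(AddCircle T, ℂ)) k =
      if k ∈ s then c k else 0 := by
  rw [ContinuousMap.coe_sum,
    fourierCoeff.sum _ _ fun m _ => integrable_continuousMap _ (c m • fourier m), Finset.sum_apply]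
  simp only [ContinuousMap.coe_smul, fourierCoeff.const_smul, fourierCoeff_fourier,
    Pi.single_apply, smul_eq_mul, mul_ite, mul_one, mul_zero]
  exact sum_ite_eq s k c

lemma fourierStieltjes_withDensity {g : AddCircle T → ℝ} (hg : Measurable g)
    (hg0 : ∀ x, 0 ≤ g x) (k : ℤ) :
    fourierStieltjes (haarAddCircle.withDensity fun x => ENNReal.ofReal (g x)) k =
      fourierCoeff (fun x => (g x : ℂ)) k := by
  rw [fourierStieltjes, fourierCoeff,
    show (fun x => ENNReal.ofReal (g x)) = fun x => ((g x).toNNReal : ℝ≥0∞) from rfl,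
    integral_withDensity_eq_integral_smul (by fun_prop)]
  congr 1 with x
  rw [NNReal.smul_def, Real.coe_toNNReal _ (hg0 x), Complex.real_smul, smul_eq_mul, mul_comm]

lemma integral_normSq_sum_fourier (μ : Measure (AddCircle T)) [IsFiniteMeasure μ] {ι : Type*}
    (s : Finset ι) (v : ι → ℂ) (f : ι → ℤ) :
    ((∫ x, Complex.normSq (∑ p ∈ s, v p * fourier (f p) x) ∂μ : ℝ) : ℂ) =
      ∑ p ∈ s, ∑ q ∈ s, v p * conj (v q) * fourierStieltjes μ (f q - f p) := by
  have hint : ∀ c : ℂ, ∀ k, Integrable (fun x => c * fourier k x) μ := fun c k =>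
    (integrable_continuousMap μ _).const_mul c
  rw [← integral_complex_ofReal]
  simp_rw [← Complex.mul_conj, map_sum, sum_mul_sum, map_mul, ← fourier_neg, mul_mul_mul_comm,
    ← fourier_add]
  rw [integral_finsetSum _ fun p _ => integrable_finsetSum _ fun q _ => hint _ _]
  refine sum_congr rfl fun p _ => ?_
  rw [integral_finsetSum _ fun q _ => hint _ _]
  refine sum_congr rfl fun q _ => ?_
  rw [integral_const_mul, fourierStieltjes, neg_sub, sub_eq_add_neg]

lemma re_sum_sum_fourierStieltjes_nonneg (μ : Measure (AddCircle T)) [IsFiniteMeasure μ]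
    {ι : Type*} (s : Finset ι) (v : ι → ℂ) (f : ι → ℤ) :
    0 ≤ (∑ p ∈ s, ∑ q ∈ s, v p * conj (v q) * fourierStieltjes μ (f q - f p)).re := by
  rw [← integral_normSq_sum_fourier, Complex.ofReal_re]
  exact integral_nonneg fun x => Complex.normSq_nonneg _

theorem three_mul_norm_fourierStieltjes_add_le (μ : Measure (AddCircle T)) [IsFiniteMeasure μ]
    {n : ℤ} (hn : 5 ≤ n) (hμ : Function.support (fourierStieltjes μ) ⊆ {0, 1, -1, n, -n}) :
    3 * (‖fourierStieltjes μ 1‖ + ‖fourierStieltjes μ n‖) ≤ 2 * μ.real Set.univ := by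
  obtain ⟨u, hu⟩ := exists_circle_conj_mul_eq_neg_norm (fourierStieltjes μ 1)
  obtain ⟨w, hw⟩ := exists_circle_conj_mul_eq_neg_norm (fourierStieltjes μ n)
  have hconj : ∀ (z : Circle) (k : ℤ),
      conj (z : ℂ) * fourierStieltjes μ k = -‖fourierStieltjes μ k‖ →
        z * fourierStieltjes μ (-k) = -‖fourierStieltjes μ k‖ := fun z k h => by
    rw [fourierStieltjes_neg, ← Complex.conj_conj (z : ℂ), ← map_mul, h]
    simp [Complex.conj_ofReal]
  have hpd := re_sum_sum_fourierStieltjes_nonneg μ (range 4 ×ˢ range 4)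
    (fun p => ↑(u ^ p.1 * w ^ p.2)) (fun p => p.1 + p.2 * n)
  rw [sum_circle_pow_grid_eq _ hn hμ u w, fourierStieltjes_zero, hu, hw, hconj u 1 hu,
    hconj w n hw] at hpd
  simp only [Complex.add_re, Complex.mul_re, Complex.re_ofNat, Complex.ofReal_re, Complex.im_ofNat,
    Complex.ofReal_im, mul_zero, sub_zero, Complex.neg_re, Complex.add_im, Complex.neg_im, neg_zero,
    add_zero] at hpd
  linarith

end AddCircle

open AddCircle

lemma cosC_eq_re_fourier (k : ℤ) (x : AddCircle (1 : ℝ)) : cosC k x = (fourier k x).re := by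
  rw [cosC, fourier_apply]
  induction k • x using QuotientAddGroup.induction_on with
  | H t =>
    rw [cosA, cos2pi_periodic.lift_coe, AddCircle.toCircle_apply_mk, Circle.coe_exp,
      Complex.exp_ofReal_mul_I_re, div_one]

lemma ofReal_cosC (k : ℤ) (x : AddCircle (1 : ℝ)) :
    (cosC k x : ℂ) = (fourier k x + fourier (-k) x) / 2 := by
  rw [cosC_eq_re_fourier, Complex.re_eq_add_conj, fourier_neg]

@[fun_prop]
lemma continuous_cosC (k : ℤ) : Continuous (cosC k) := by
  rw [funext (cosC_eq_re_fourier k)]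
  exact Complex.continuous_re.comp (map_continuous _)

lemma neg_one_le_cosC (k : ℤ) (x : AddCircle (1 : ℝ)) : -1 ≤ cosC k x := by
  have h := Complex.abs_re_le_norm (fourier k x)
  rw [fourier_apply, Circle.norm_coe, ← fourier_apply, ← cosC_eq_re_fourier, abs_le] at h
  exact h.1

lemma ofReal_density_eq_sum_fourier {n : ℤ} (hn : 2 ≤ n) :
    (fun x => ((1 + (1/4) * cosC 1 x + (1/4) * cosC n x : ℝ) : ℂ)) =
      ⇑(∑ m ∈ ({0, 1, -1, n, -n} : Finset ℤ), (if m = 0 then 1 else 8⁻¹ : ℂ) • fourier m :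
        C(AddCircle (1 : ℝ), ℂ)) := by
  ext x
  rw [sum_insert ?_, sum_insert ?_, sum_insert ?_, sum_pair (by omega)]
  · push_cast
    simp only [ofReal_cosC, Pi.add_apply, Pi.smul_apply, smul_eq_mul,
      fourier_zero, ↓reduceIte, neg_eq_zero, show n ≠ 0 by omega]
    ring
  all_goals simp only [mem_insert, mem_singleton]; omega

lemma normSq_fourierStieltjes_of_autocorrC_eq {n : ℤ} (hn : 2 ≤ n)
    (ρ : Measure (AddCircle (1 : ℝ))) [IsFiniteMeasure ρ]
    (hρ : autocorrC ρ = volume.withDensity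
      (fun x => ENNReal.ofReal (1 + (1/4) * cosC 1 x + (1/4) * cosC n x))) (k : ℤ) :
    (Complex.normSq (fourierStieltjes ρ k) : ℂ) =
      if k ∈ ({0, 1, -1, n, -n} : Finset ℤ) then (if k = 0 then 1 else 8⁻¹) else 0 := by
  have hvol : (volume : Measure (AddCircle (1 : ℝ))) = haarAddCircle := by
    rw [volume_eq_smul_haarAddCircle, ENNReal.ofReal_one, one_smul]
  rw [← fourierStieltjes_map_sub, ← autocorrC, hρ, hvol,
    fourierStieltjes_withDensity (by fun_prop) fun x => by
      linarith [neg_one_le_cosC 1 x, neg_one_le_cosC n x],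
    ofReal_density_eq_sum_fourier hn, fourierCoeff_sum_smul_fourier]

/-- Remark 3.2: the set of autocorrelations of probability measures on the circle is not
convex: for all sufficiently large `n`, the measure with density
`1 + (1/4)cos(2πx) + (1/4)cos(2πnx)` (a convex combination of autocorrelations) is not the
autocorrelation of any probability measure. -/
theorem stmt2 : ∃ N : ℕ, ∀ n : ℕ, N ≤ n →
    ¬ ∃ ρ : Measure (AddCircle (1 : ℝ)), IsProbabilityMeasure ρ ∧
        autocorrC ρ = volume.withDensity
          (fun x => ENNReal.ofReal (1 + (1/4) * cosC 1 x + (1/4) * cosC (n : ℤ) x)) := by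
  refine ⟨5, fun n hn ⟨ρ, _, hρ⟩ => ?_⟩
  have hcoef := normSq_fourierStieltjes_of_autocorrC_eq (by omega) ρ hρ
  have hnorm : ∀ k : ℤ, k = 1 ∨ k = n → ‖fourierStieltjes ρ k‖ ^ 2 = 8⁻¹ := by
    intro k hk
    have h := hcoef k
    rw [if_pos (by simp only [mem_insert, mem_singleton]; omega), if_neg (by omega)] at h
    rw [← Complex.normSq_eq_norm_sq]
    apply Complex.ofReal_injective
    rw [h]
    norm_num
  have hsupp : Function.support (fourierStieltjes ρ) ⊆ {0, 1, -1, (n : ℤ), -(n : ℤ)} := by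
    intro k hk
    by_contra h
    have h' := hcoef k
    rw [if_neg (by simpa using h)] at h'
    exact hk (Complex.normSq_eq_zero.mp (by exact_mod_cast h'))
  have h := three_mul_norm_fourierStieltjes_add_le ρ (n := n) (by omega) hsupp
  have hequal := (pow_left_inj₀ (norm_nonneg _) (norm_nonneg _) two_ne_zero).mp
    ((hnorm 1 (.inl rfl)).trans (hnorm n (.inr rfl)).symm)
  rw [probReal_univ, ← hequal] at h
  nlinarith [hnorm 1 (.inl rfl), norm_nonneg (fourierStieltjes ρ 1)]
end

section
/- Sufficient condition for a global minimizer via the convex relaxation: let W : 𝕋^d → ℝ be continuous with W(−x) = W(x), and let ρ* be a probability measure on 𝕋^d such that ∫ W dF_{ρ*} ≤ ∫ W dF for every measure F in the relaxed cone C. Then ρ* is a global minimizer of the pairwise energy: E(ρ*) ≤ E(ρ) for every probability measure ρ on 𝕋^d. (Remark 3.5.) -/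
open MeasureTheory Real
open scoped ENNReal

/-- The autocorrelation of a measure `ρ` on `𝕋^d`: the pushforward of `ρ × ρ`
under `(x, y) ↦ x - y`. -/
noncomputable def autocorr {d : ℕ} (ρ : Measure (Torus d)) : Measure (Torus d) :=
  (ρ.prod ρ).map (fun p => p.1 - p.2)

/-- The relaxed cone `C`: nonnegative measures on `𝕋^d` of total mass one with vanishing
sine coefficients and nonnegative cosine coefficients for all `k ≠ 0`. -/
def inCone {d : ℕ} (F : Measure (Torus d)) : Prop :=
  F Set.univ = 1 ∧ ∀ k : Fin d → ℤ, k ≠ 0 →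
    (∫ x, tsin k x ∂F) = 0 ∧ 0 ≤ ∫ x, tcos k x ∂F

/-- The pairwise interaction energy `E(ρ) = (1/2) ∫∫ W(x - y) dρ(x) dρ(y)`. -/
noncomputable def energy {d : ℕ} (W : Torus d → ℝ) (ρ : Measure (Torus d)) : ℝ :=
  (1/2) * ∫ x, ∫ y, W (x - y) ∂ρ ∂ρ

section Aux

theorem continuous_cosA : Continuous cosA :=
  (Real.continuous_cos.comp (continuous_const.mul continuous_id)).quotient_liftOn' _

theorem continuous_sinA : Continuous sinA :=
  (Real.continuous_sin.comp (continuous_const.mul continuous_id)).quotient_liftOn' _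

theorem cosA_coe (t : ℝ) : cosA (t : AddCircle (1:ℝ)) = Real.cos (2 * Real.pi * t) :=
  cos2pi_periodic.lift_coe t

theorem sinA_coe (t : ℝ) : sinA (t : AddCircle (1:ℝ)) = Real.sin (2 * Real.pi * t) :=
  sin2pi_periodic.lift_coe t

theorem cosA_sub (a b : AddCircle (1:ℝ)) :
    cosA (a - b) = cosA a * cosA b + sinA a * sinA b := by
  induction a using QuotientAddGroup.induction_on with
  | H s =>
  induction b using QuotientAddGroup.induction_on with
  | H t =>
  have : ((s : AddCircle (1:ℝ)) - (t : AddCircle (1:ℝ))) = ((s - t : ℝ) : AddCircle (1:ℝ)) := by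
    norm_cast
  rw [this, cosA_coe, cosA_coe, cosA_coe, sinA_coe, sinA_coe, mul_sub, Real.cos_sub]

theorem sinA_sub (a b : AddCircle (1:ℝ)) :
    sinA (a - b) = sinA a * cosA b - cosA a * sinA b := by
  induction a using QuotientAddGroup.induction_on with
  | H s =>
  induction b using QuotientAddGroup.induction_on with
  | H t =>
  have : ((s : AddCircle (1:ℝ)) - (t : AddCircle (1:ℝ))) = ((s - t : ℝ) : AddCircle (1:ℝ)) := by
    norm_cast
  rw [this, sinA_coe, sinA_coe, cosA_coe, cosA_coe, sinA_coe, mul_sub, Real.sin_sub]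

theorem dot_sub {d : ℕ} (k : Fin d → ℤ) (x y : Torus d) :
    (∑ i, k i • (x - y) i) = (∑ i, k i • x i) - (∑ i, k i • y i) := by
  rw [← Finset.sum_sub_distrib]
  exact Finset.sum_congr rfl fun i _ => by simp [smul_sub]

theorem tcos_sub {d : ℕ} (k : Fin d → ℤ) (x y : Torus d) :
    tcos k (x - y) = tcos k x * tcos k y + tsin k x * tsin k y := by
  unfold tcos tsin; rw [dot_sub, cosA_sub]

theorem tsin_sub {d : ℕ} (k : Fin d → ℤ) (x y : Torus d) :
    tsin k (x - y) = tsin k x * tcos k y - tcos k x * tsin k y := by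
  unfold tcos tsin; rw [dot_sub, sinA_sub]

theorem continuous_tcos {d : ℕ} (k : Fin d → ℤ) : Continuous (tcos k) :=
  continuous_cosA.comp <| continuous_finset_sum _ fun i _ =>
    (continuous_zsmul (k i)).comp (continuous_apply i)

theorem continuous_tsin {d : ℕ} (k : Fin d → ℤ) : Continuous (tsin k) :=
  continuous_sinA.comp <| continuous_finset_sum _ fun i _ =>
    (continuous_zsmul (k i)).comp (continuous_apply i)

theorem sub_measurable {d : ℕ} :
    Measurable (fun p : Torus d × Torus d => p.1 - p.2) :=
  (continuous_fst.sub continuous_snd).measurable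

theorem integrable_of_continuous {E : Type*} [TopologicalSpace E] [CompactSpace E]
    [MeasurableSpace E] [OpensMeasurableSpace E]
    (μ : Measure E) [IsFiniteMeasure μ] (g : E → ℝ) (hg : Continuous g) :
    MeasureTheory.Integrable g μ :=
  hg.integrable_of_hasCompactSupport (HasCompactSupport.of_compactSpace g)

theorem integral_autocorr {d : ℕ} (ρ : Measure (Torus d)) [IsProbabilityMeasure ρ]
    (g : Torus d → ℝ) (hg : Continuous g) :
    ∫ x, g x ∂(autocorr ρ) = ∫ x, ∫ y, g (x - y) ∂ρ ∂ρ := by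
  rw [autocorr, integral_map sub_measurable.aemeasurable hg.aestronglyMeasurable]
  exact MeasureTheory.integral_prod _
    (integrable_of_continuous _ _ (hg.comp (continuous_fst.sub continuous_snd)))

theorem autocorr_inCone {d : ℕ} (ρ : Measure (Torus d)) [IsProbabilityMeasure ρ] :
    inCone (autocorr ρ) := by
  haveI : IsProbabilityMeasure (autocorr ρ) :=
    Measure.isProbabilityMeasure_map sub_measurable.aemeasurable
  refine ⟨measure_univ, fun k _ => ?_⟩
  have htc : MeasureTheory.Integrable (tcos k) ρ :=
    integrable_of_continuous _ _ (continuous_tcos k)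
  have hts : MeasureTheory.Integrable (tsin k) ρ :=
    integrable_of_continuous _ _ (continuous_tsin k)
  set C := ∫ x, tcos k x ∂ρ with hC
  set S := ∫ x, tsin k x ∂ρ with hS
  constructor
  · rw [integral_autocorr ρ _ (continuous_tsin k)]
    have h1 : ∀ x : Torus d, (∫ y, tsin k (x - y) ∂ρ) = tsin k x * C - tcos k x * S := by
      intro x
      have : (fun y => tsin k (x - y)) =
          fun y => tsin k x * tcos k y - tcos k x * tsin k y := by
        funext y; exact tsin_sub k x y
      rw [this, integral_sub (htc.const_mul _) (hts.const_mul _),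
        integral_const_mul, integral_const_mul]
    simp only [h1]
    rw [integral_sub (hts.mul_const C) (htc.mul_const S),
      integral_mul_const, integral_mul_const, ← hC, ← hS]
    ring
  · rw [integral_autocorr ρ _ (continuous_tcos k)]
    have h1 : ∀ x : Torus d, (∫ y, tcos k (x - y) ∂ρ) = tcos k x * C + tsin k x * S := by
      intro x
      have : (fun y => tcos k (x - y)) =
          fun y => tcos k x * tcos k y + tsin k x * tsin k y := by
        funext y; exact tcos_sub k x y
      rw [this, integral_add (htc.const_mul _) (hts.const_mul _),
        integral_const_mul, integral_const_mul]
    simp only [h1]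
    rw [integral_add (htc.mul_const _) (hts.mul_const _),
      integral_mul_const, integral_mul_const, ← hC, ← hS]
    nlinarith [mul_self_nonneg C, mul_self_nonneg S]

end Aux

/-- Remark 3.5: sufficient condition for a global minimizer.  If the autocorrelation of a
probability measure `ρ*` minimizes `∫ W dF` over the relaxed cone `C`, then `ρ*` is a global
minimizer of the pairwise energy over probability measures. -/
theorem stmt4 {d : ℕ} (W : Torus d → ℝ) (hWc : Continuous W) (hWsymm : ∀ x, W (-x) = W x)
    (ρs : Measure (Torus d)) [IsProbabilityMeasure ρs]
    (hopt : ∀ F : Measure (Torus d), inCone F →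
      (∫ x, W x ∂(autocorr ρs)) ≤ ∫ x, W x ∂F) :
    ∀ ρ : Measure (Torus d), IsProbabilityMeasure ρ → energy W ρs ≤ energy W ρ := by
  intro ρ hρ
  have h1 : energy W ρ = (1/2) * ∫ x, W x ∂(autocorr ρ) := by
    rw [energy, integral_autocorr ρ W hWc]
  have h2 : energy W ρs = (1/2) * ∫ x, W x ∂(autocorr ρs) := by
    rw [energy, integral_autocorr ρs W hWc]
  rw [h1, h2]
  have := hopt (autocorr ρ) (autocorr_inCone ρ)
  linarith
end

section
/- The Schulz-Snyder iteration preserves mirror symmetry: let ρ : 𝕋^d → ℝ be a continuous, strictly positive probability density and F_R : 𝕋^d → ℝ a continuous nonnegative probability density with F_R(−y) = F_R(y) for all y. With F_ρ(y) = ∫ ρ(x)ρ(x+y) dx, define (Tρ)(x) = ρ(x) ∫ ρ(x+y) F_R(y)/F_ρ(y) dy. If there is a ∈ 𝕋^d with ρ(a − x) = ρ(x − a) for all x ∈ 𝕋^d, then (Tρ)(a − x) = (Tρ)(x − a) for all x ∈ 𝕋^d. (Invariant-set property of the Schulz-Snyder algorithm, Section 4.) -/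
open MeasureTheory Real
open scoped ENNReal

/-- The Schulz-Snyder iteration preserves mirror symmetry (Section 4): if `ρ` has a plane of
symmetry `ρ(a - x) = ρ(x - a)` and `F_R` is mirror symmetric, then the iterate
`(Tρ)(x) = ρ(x) ∫ ρ(x+y) F_R(y)/F_ρ(y) dy` has the same plane of symmetry. -/
theorem stmt13 {d : ℕ} (ρ FR : Torus d → ℝ)
    (hρc : Continuous ρ) (hρpos : ∀ x, 0 < ρ x) (hρ1 : (∫ x, ρ x) = 1)
    (hFRc : Continuous FR) (hFRnonneg : ∀ x, 0 ≤ FR x) (hFR1 : (∫ x, FR x) = 1)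
    (hFRsymm : ∀ y, FR (-y) = FR y)
    (aa : Torus d) (hsymm : ∀ x, ρ (aa - x) = ρ (x - aa)) :
    ∀ x, ρ (aa - x) * (∫ y, ρ ((aa - x) + y) * FR y / (∫ z, ρ z * ρ (z + y)))
        = ρ (x - aa) * ∫ y, ρ ((x - aa) + y) * FR y / (∫ z, ρ z * ρ (z + y)) := by
  haveI : (volume : Measure (Torus d)).IsNegInvariant :=
    Measure.IsAddHaarMeasure.isNegInvariant_of_regular (μ := (volume : Measure (Torus d)))
  intro x
  rw [hsymm]
  congr 1
  have key : ∀ y : Torus d,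
      ρ ((aa - x) + y) * FR y / (∫ z, ρ z * ρ (z + y))
        = ρ ((x - aa) + (-y)) * FR (-y) / (∫ z, ρ z * ρ (z + (-y))) := by
    intro y
    have h1 : ρ ((aa - x) + y) = ρ ((x - aa) + (-y)) := by
      have h := hsymm (x - y)
      have e1 : aa - (x - y) = (aa - x) + y := by abel
      have e2 : (x - y) - aa = (x - aa) + (-y) := by abel
      rw [e1, e2] at h
      exact h
    have h3 : (∫ z, ρ z * ρ (z + (-y))) = ∫ z, ρ z * ρ (z + y) := by
      have := MeasureTheory.integral_add_right_eq_self
        (μ := (volume : Measure (Torus d))) (fun z => ρ z * ρ (z + (-y))) y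
      simp only [add_neg_cancel_right] at this
      rw [← this]
      congr 1
      funext z
      rw [mul_comm]
    rw [h1, hFRsymm, h3]
  calc (∫ y, ρ ((aa - x) + y) * FR y / (∫ z, ρ z * ρ (z + y)))
      = ∫ y, ρ ((x - aa) + (-y)) * FR (-y) / (∫ z, ρ z * ρ (z + (-y))) := by
        congr 1; funext y; exact key y
    _ = ∫ y, ρ ((x - aa) + y) * FR y / (∫ z, ρ z * ρ (z + y)) :=
        MeasureTheory.integral_neg_eq_self
          (fun y => ρ ((x - aa) + y) * FR y / (∫ z, ρ z * ρ (z + y))) volume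
end

section
/- Proposition C.1 (continuity of θ̃): define θ̃ : ℝ → ℝ by θ̃(s) = −1 if s is irrational, and for rational s with reduced fraction s = q/p (p ≥ 1, gcd(|q|, p) = 1): θ̃(s) = −1 if p is even and θ̃(s) = −cos(π/p) if p is odd. Then for every s₀ ∈ (0, 1/2): θ̃ is continuous at s₀ if s₀ is irrational or s₀ is rational with even reduced denominator, and θ̃ is discontinuous at s₀ if s₀ is rational with odd reduced denominator. (Note θ̃(q/p) = min_{k∈ℤ} cos(2πkq/p).) -/
open Classical in
/-- The function `θ̃` of Appendix C: `θ̃(s) = -1` for irrational `s`, while for rational `s`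
with reduced denominator `p`, `θ̃(s) = -1` if `p` is even and `-cos(π/p)` if `p` is odd. -/
noncomputable def thetaT (s : ℝ) : ℝ :=
  if h : ∃ r : ℚ, (r : ℝ) = s then
    (if Even h.choose.den then -1 else -Real.cos (Real.pi / (h.choose.den : ℝ)))
  else -1

/-!
`θ̃ ≥ -1` everywhere and `θ̃ = -1` on the dense set of irrationals, so `θ̃` can only be continuous
at points where it equals `-1`. Conversely, for each `N` the rationals with denominator at most `N`
form a closed discrete set, so near any `s` all other rationals have denominators `p > N`, where
`θ̃ ≤ -cos (π / p)` is close to `-1`. At a rational with odd denominator `θ̃ = -cos (π / p) > -1`.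
-/

open Filter Topology Real

lemma thetaT_ratCast (r : ℚ) :
    thetaT r = if Even r.den then -1 else -cos (π / r.den) := by
  have h : ∃ q : ℚ, (q : ℝ) = r := ⟨r, rfl⟩
  rw [thetaT, dif_pos h, Rat.cast_injective h.choose_spec]

lemma thetaT_of_irrational {s : ℝ} (hs : Irrational s) : thetaT s = -1 :=
  dif_neg hs

lemma thetaT_eq_neg_one_or (s : ℝ) :
    thetaT s = -1 ∨ ∃ r : ℚ, (r : ℝ) = s ∧ thetaT s = -cos (π / r.den) := by
  by_cases hs : Irrational s
  · exact .inl (thetaT_of_irrational hs)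
  · obtain ⟨r, rfl⟩ := not_not.1 hs
    rw [thetaT_ratCast]
    split_ifs
    exacts [.inl rfl, .inr ⟨r, rfl, rfl⟩]

lemma neg_one_le_thetaT (s : ℝ) : -1 ≤ thetaT s := by
  rcases thetaT_eq_neg_one_or s with h | ⟨r, -, h⟩ <;> rw [h]
  linarith [cos_le_one (π / r.den)]

lemma cos_pi_div_natCast_ne_one {p : ℕ} (hp : p ≠ 0) : cos (π / p) ≠ 1 := by
  have hp1 : (1 : ℝ) ≤ p := by exact_mod_cast Nat.one_le_iff_ne_zero.2 hp
  have hpos : 0 < π / p := by positivity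
  have hle : π / p ≤ π := div_le_self pi_pos.le hp1
  rw [Ne, cos_eq_one_iff_of_lt_of_lt (by linarith) (by linarith)]
  exact hpos.ne'

lemma thetaT_ratCast_of_odd_den {r : ℚ} (hr : Odd r.den) : thetaT r ≠ -1 := by
  rw [thetaT_ratCast, if_neg (Nat.not_even_iff_odd.2 hr), Ne, neg_inj]
  exact cos_pi_div_natCast_ne_one r.den_nz

lemma tendsto_cos_pi_div_natCast_atTop :
    Tendsto (fun p : ℕ => cos (π / p)) atTop (𝓝 1) := by
  have h := (continuous_cos.tendsto 0).comp (tendsto_const_div_atTop_nhds_zero_nat π)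
  rwa [cos_zero] at h

lemma eventually_nhdsNE_lt_den (N : ℕ) (x : ℝ) :
    ∀ᶠ y in 𝓝[≠] x, ∀ r : ℚ, (r : ℝ) = y → N < r.den := by
  have hmult : ∀ k : ℕ, ∀ᶠ y in 𝓝[≠] x, y ∉ AddSubgroup.zmultiples ((k : ℝ)⁻¹) := fun k =>
    disjoint_principal_right.1 <| isClosed_and_discrete_iff.1
      ⟨AddSubgroup.isClosed_of_discrete, SetLike.isDiscrete_iff_discreteTopology.2 inferInstance⟩ x
  filter_upwards [(Set.finite_le_nat N).eventually_all.2 fun k _ => hmult k] with y hy r hr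
  by_contra! hle
  refine hy r.den hle (AddSubgroup.mem_zmultiples_iff.2 ⟨r.num, ?_⟩)
  rw [← hr, Rat.cast_def, zsmul_eq_mul, div_eq_mul_inv]

lemma continuousAt_thetaT_iff {s : ℝ} : ContinuousAt thetaT s ↔ thetaT s = -1 := by
  constructor
  · intro hcont
    have hirr : ∃ᶠ x in 𝓝 s, thetaT x = -1 :=
      (mem_closure_iff_frequently.1 (dense_irrational s)).mono fun _ => thetaT_of_irrational
    exact tendsto_nhds_unique_of_frequently_eq hcont tendsto_const_nhds hirr
  · intro hs
    rw [← continuousWithinAt_compl_self, ContinuousWithinAt, hs]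
    refine tendsto_order.2 ⟨fun a ha => .of_forall fun x => ha.trans_le (neg_one_le_thetaT x),
      fun b hb => ?_⟩
    obtain ⟨N, hN⟩ := eventually_atTop.1 <|
      tendsto_cos_pi_div_natCast_atTop.neg.eventually (gt_mem_nhds hb)
    filter_upwards [eventually_nhdsNE_lt_den N s] with x hx
    rcases thetaT_eq_neg_one_or x with h | ⟨r, hr, h⟩
    · rw [h]; exact hb
    · rw [h]; exact hN r.den (hx r hr).le

theorem stmt18_general (s₀ : ℝ) :
    ((Irrational s₀ ∨ ∃ r : ℚ, (r : ℝ) = s₀ ∧ Even r.den) → ContinuousAt thetaT s₀) ∧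
      ((∃ r : ℚ, (r : ℝ) = s₀ ∧ Odd r.den) → ¬ ContinuousAt thetaT s₀) := by
  rw [continuousAt_thetaT_iff]
  refine ⟨?_, ?_⟩
  · rintro (hirr | ⟨r, rfl, heven⟩)
    · exact thetaT_of_irrational hirr
    · rw [thetaT_ratCast, if_pos heven]
  · rintro ⟨r, rfl, hodd⟩
    exact thetaT_ratCast_of_odd_den hodd

/-- Proposition C.1: on `(0, 1/2)`, `θ̃` is continuous at irrationals and at rationals with
even reduced denominator, and discontinuous at rationals with odd reduced denominator. -/
theorem stmt18 (s₀ : ℝ) (h₀ : s₀ ∈ Set.Ioo (0 : ℝ) (1/2)) :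
    ((Irrational s₀ ∨ ∃ r : ℚ, (r : ℝ) = s₀ ∧ Even r.den) → ContinuousAt thetaT s₀) ∧
      ((∃ r : ℚ, (r : ℝ) = s₀ ∧ Odd r.den) → ¬ ContinuousAt thetaT s₀) :=
  stmt18_general s₀
end
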